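/- arXiv:1503.04578 — 4 statements merged into one kernel-verified Lean document; each statement's English description precedes it below -/
import Mathlib

section
/- Let v : ℝ → ℂ be a bounded measurable function. Then the double-layer potential W(x₁,x₂) = (1/(2π)) ∫_ℝ x₂ v(τ) / ((x₁−τ)² + x₂²) dτ is harmonic on ℝ² ∖ (ℝ × {0}): it is twice continuously differentiable there and ∂²W/∂x₁² + ∂²W/∂x₂² = 0 at every point (x₁,x₂) with x₂ ≠ 0. -/
/-!
The Poisson kernel is an imaginary part: `x₂ / |τ - z|² = Im (τ - z)⁻¹` for `z = x₁ + i x₂`, hence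
`W(x) = (F z - F z̄) / (4πi)` where `F w = ∫ ((τ - w)⁻¹ - (τ - i)⁻¹) v(τ) dτ`. The subtracted term
makes the kernel `O(1/τ²)` locally uniformly in `w ∉ ℝ`, so `F` is holomorphic off the real axis
by differentiation under the integral sign. Finally `f ∘ L` is harmonic for holomorphic `f` and
any `ℝ`-linear `L : ℝ² → ℂ` with `L(e₁)² + L(e₂)² = 0`, which holds for both `x ↦ z` and `x ↦ z̄`.
-/

open MeasureTheory

/-- The Laplacian of a complex-valued function on `ℝ × ℝ` at `x`: sum of the second partial
derivatives in the two coordinate directions. -/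
noncomputable def lapPlaneC (W : ℝ × ℝ → ℂ) (x : ℝ × ℝ) : ℂ :=
  fderiv ℝ (fun y => fderiv ℝ W y ((1:ℝ), (0:ℝ))) x ((1:ℝ), (0:ℝ)) +
    fderiv ℝ (fun y => fderiv ℝ W y ((0:ℝ), (1:ℝ))) x ((0:ℝ), (1:ℝ))

open Complex ComplexConjugate Filter Topology

namespace Complex

lemma ofReal_sub_ne_zero {w : ℂ} (hw : w.im ≠ 0) (τ : ℝ) : (τ : ℂ) - w ≠ 0 :=
  fun h => hw (by simpa using congrArg im h)

lemma continuous_inv_ofReal_sub {w : ℂ} (hw : w.im ≠ 0) :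
    Continuous fun τ : ℝ => ((τ : ℂ) - w)⁻¹ :=
  (continuous_ofReal.sub continuous_const).inv₀ (ofReal_sub_ne_zero hw)

lemma norm_inv_ofReal_sub_I_sq (τ : ℝ) : ‖((τ : ℂ) - I)⁻¹‖ ^ 2 = (1 + τ ^ 2)⁻¹ := by
  rw [norm_inv, inv_pow, Complex.sq_norm, normSq_apply]
  simp
  ring

lemma norm_inv_ofReal_sub_le {w : ℂ} {δ : ℝ} (hδ : 0 < δ) (hw : δ ≤ |w.im|) (τ : ℝ) :
    ‖((τ : ℂ) - w)⁻¹‖ ≤ (1 + ‖w - I‖ / δ) * ‖((τ : ℂ) - I)⁻¹‖ := by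
  have hδw : δ ≤ ‖(τ : ℂ) - w‖ :=
    hw.trans (by simpa using abs_im_le_norm ((τ : ℂ) - w))
  have hpos : 0 < ‖(τ : ℂ) - w‖ := hδ.trans_le hδw
  have hscale : ‖w - I‖ ≤ ‖(τ : ℂ) - w‖ * (‖w - I‖ / δ) := by
    rw [mul_div_assoc', le_div_iff₀ hδ, mul_comm]
    exact mul_le_mul_of_nonneg_right hδw (norm_nonneg (w - I))
  rw [norm_inv, norm_inv, ← div_eq_mul_inv,
    le_div_iff₀ (norm_pos_iff.2 (ofReal_sub_ne_zero (w := I) (by simp) τ)), inv_mul_le_iff₀ hpos]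
  calc ‖(τ : ℂ) - I‖ ≤ ‖(τ : ℂ) - w‖ + ‖w - I‖ := norm_sub_le_norm_sub_add_norm_sub _ _ _
    _ ≤ ‖(τ : ℂ) - w‖ * (1 + ‖w - I‖ / δ) := by linarith

lemma half_abs_im_le_abs_im_of_mem_ball {w₀ w : ℂ} (hw : w ∈ Metric.ball w₀ (|w₀.im| / 2)) :
    |w₀.im| / 2 ≤ |w.im| := by
  have h₁ : |w₀.im| - |w.im| ≤ ‖w₀ - w‖ :=
    (abs_sub_abs_le_abs_sub _ _).trans (by simpa using abs_im_le_norm (w₀ - w))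
  have h₂ : ‖w₀ - w‖ < |w₀.im| / 2 := by rwa [← dist_eq_norm, dist_comm]
  linarith

end Complex

noncomputable def regularizedCauchyKernel (w : ℂ) (τ : ℝ) : ℂ :=
  ((τ : ℂ) - w)⁻¹ - ((τ : ℂ) - I)⁻¹

noncomputable def regularizedCauchyTransform (v : ℝ → ℂ) (w : ℂ) : ℂ :=
  ∫ τ : ℝ, regularizedCauchyKernel w τ * v τ

lemma ofReal_poissonKernel_eq (a b τ : ℝ) :
    ((b / ((a - τ) ^ 2 + b ^ 2) : ℝ) : ℂ) =
      (regularizedCauchyKernel (a + b * I) τ - regularizedCauchyKernel (a - b * I) τ) / (2 * I) := by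
  have hconj : conj ((τ : ℂ) - (a + b * I))⁻¹ = ((τ : ℂ) - (a - b * I))⁻¹ := by
    simp [sub_eq_add_neg]
  rw [regularizedCauchyKernel, regularizedCauchyKernel, sub_sub_sub_cancel_right, ← hconj,
    ← im_eq_sub_conj, inv_im, normSq_apply]
  congr 1
  simp
  ring

lemma hasDerivAt_regularizedCauchyKernel {w : ℂ} (hw : w.im ≠ 0) (τ : ℝ) :
    HasDerivAt (regularizedCauchyKernel · τ) (((τ : ℂ) - w) ^ 2)⁻¹ w := by
  simpa [regularizedCauchyKernel] using (((hasDerivAt_id w).const_sub (τ : ℂ)).inv (ofReal_sub_ne_zero hw τ)).sub_const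
    ((τ : ℂ) - I)⁻¹

section CauchyTransform

variable {v : ℝ → ℂ}

lemma norm_inv_one_add_sq_smul (τ : ℝ) :
    ‖(1 + τ ^ 2)⁻¹ • v τ‖ = ‖((τ : ℂ) - I)⁻¹‖ ^ 2 * ‖v τ‖ := by
  rw [norm_smul, norm_inv_ofReal_sub_I_sq, norm_inv, Real.norm_of_nonneg (by positivity)]

lemma norm_regularizedCauchyKernel_mul_le {w : ℂ} {δ : ℝ} (hδ : 0 < δ) (hw : δ ≤ |w.im|)
    (τ : ℝ) :
    ‖regularizedCauchyKernel w τ * v τ‖ ≤ ‖w - I‖ * (1 + ‖w - I‖ / δ) * ‖(1 + τ ^ 2)⁻¹ • v τ‖ := by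
  have hw₀ : w.im ≠ 0 := fun h => by simp [h] at hw; linarith
  rw [regularizedCauchyKernel,
    inv_sub_inv' (ofReal_sub_ne_zero hw₀ τ) (ofReal_sub_ne_zero (w := I) (by simp) τ),
    sub_sub_sub_cancel_left, norm_inv_one_add_sq_smul, norm_mul, norm_mul, norm_mul]
  calc ‖((τ : ℂ) - w)⁻¹‖ * ‖w - I‖ * ‖((τ : ℂ) - I)⁻¹‖ * ‖v τ‖
      ≤ (1 + ‖w - I‖ / δ) * ‖((τ : ℂ) - I)⁻¹‖ * ‖w - I‖ * ‖((τ : ℂ) - I)⁻¹‖ * ‖v τ‖ := by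
        gcongr
        exact norm_inv_ofReal_sub_le hδ hw τ
    _ = _ := by ring

lemma norm_inv_ofReal_sub_sq_mul_le {w : ℂ} {δ : ℝ} (hδ : 0 < δ) (hw : δ ≤ |w.im|) (τ : ℝ) :
    ‖(((τ : ℂ) - w) ^ 2)⁻¹ * v τ‖ ≤ (1 + ‖w - I‖ / δ) ^ 2 * ‖(1 + τ ^ 2)⁻¹ • v τ‖ := by
  rw [norm_inv_one_add_sq_smul, norm_mul, ← inv_pow, norm_pow, ← mul_assoc, ← mul_pow]
  gcongr
  exact norm_inv_ofReal_sub_le hδ hw τ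

lemma aestronglyMeasurable_of_integrable_inv_one_add_sq_smul
    (hv : Integrable fun τ : ℝ => (1 + τ ^ 2)⁻¹ • v τ) : AEStronglyMeasurable v := by
  have hcont : Continuous fun τ : ℝ => 1 + τ ^ 2 := by fun_prop
  refine (hcont.aestronglyMeasurable.smul hv.aestronglyMeasurable).congr (ae_of_all _ fun τ => ?_)
  exact smul_inv_smul₀ (by positivity : (1 + τ ^ 2 : ℝ) ≠ 0) (v τ)

lemma aestronglyMeasurable_regularizedCauchyKernel_mul (hv : AEStronglyMeasurable v) {w : ℂ}
    (hw : w.im ≠ 0) : AEStronglyMeasurable fun τ : ℝ => regularizedCauchyKernel w τ * v τ :=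
  ((continuous_inv_ofReal_sub hw).sub
    (continuous_inv_ofReal_sub (w := I) (by simp))).aestronglyMeasurable.mul hv

lemma integrable_regularizedCauchyKernel_mul (hv : Integrable fun τ : ℝ => (1 + τ ^ 2)⁻¹ • v τ)
    {w : ℂ} (hw : w.im ≠ 0) : Integrable fun τ : ℝ => regularizedCauchyKernel w τ * v τ :=
  (hv.norm.const_mul _).mono'
    (aestronglyMeasurable_regularizedCauchyKernel_mul
      (aestronglyMeasurable_of_integrable_inv_one_add_sq_smul hv) hw)
    (ae_of_all _ (norm_regularizedCauchyKernel_mul_le (abs_pos.2 hw) le_rfl))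

lemma differentiableOn_regularizedCauchyTransform
    (hv : Integrable fun τ : ℝ => (1 + τ ^ 2)⁻¹ • v τ) :
    DifferentiableOn ℂ (regularizedCauchyTransform v) {w | w.im ≠ 0} := by
  intro w₀ (hw₀ : w₀.im ≠ 0)
  set δ := |w₀.im| / 2
  have hδ : 0 < δ := by positivity
  have hball (w) (hw : w ∈ Metric.ball w₀ δ) : δ ≤ |w.im| :=
    half_abs_im_le_abs_im_of_mem_ball hw
  have hball_ne (w) (hw : w ∈ Metric.ball w₀ δ) : w.im ≠ 0 :=
    abs_pos.1 (hδ.trans_le (hball w hw))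
  have hvm := aestronglyMeasurable_of_integrable_inv_one_add_sq_smul hv
  have hbound (τ : ℝ) (w) (hw : w ∈ Metric.ball w₀ δ) :
      ‖(((τ : ℂ) - w) ^ 2)⁻¹ * v τ‖ ≤ (1 + (‖w₀ - I‖ + δ) / δ) ^ 2 * ‖(1 + τ ^ 2)⁻¹ • v τ‖ := by
    refine (norm_inv_ofReal_sub_sq_mul_le hδ (hball w hw) τ).trans ?_
    have : ‖w - w₀‖ < δ := by rw [← dist_eq_norm]; exact hw
    have : ‖w - I‖ ≤ ‖w₀ - I‖ + δ := by
      linarith [norm_sub_le_norm_sub_add_norm_sub w w₀ I]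
    gcongr
  have hmeas_deriv : AEStronglyMeasurable fun τ : ℝ => (((τ : ℂ) - w₀) ^ 2)⁻¹ * v τ := by
    simp_rw [← inv_pow]
    exact ((continuous_inv_ofReal_sub hw₀).pow 2).aestronglyMeasurable.mul hvm
  exact (hasDerivAt_integral_of_dominated_loc_of_deriv_le (Metric.ball_mem_nhds w₀ hδ)
    (eventually_of_mem (Metric.ball_mem_nhds w₀ hδ) fun w hw =>
      aestronglyMeasurable_regularizedCauchyKernel_mul hvm (hball_ne w hw))
    (integrable_regularizedCauchyKernel_mul hv hw₀) hmeas_deriv (ae_of_all _ hbound)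
    (hv.norm.const_mul _)
    (ae_of_all _ fun τ w hw => (hasDerivAt_regularizedCauchyKernel (hball_ne w hw) τ).mul_const
      (v τ))).2.differentiableAt.differentiableWithinAt

lemma integral_poissonKernel_mul (hv : Integrable fun τ : ℝ => (1 + τ ^ 2)⁻¹ • v τ) (a b : ℝ) :
    ∫ τ : ℝ, ((b / ((a - τ) ^ 2 + b ^ 2) : ℝ) : ℂ) * v τ =
      (regularizedCauchyTransform v (a + b * I) - regularizedCauchyTransform v (a - b * I)) /
        (2 * I) := by
  rcases eq_or_ne b 0 with rfl | hb
  · simp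
  rw [regularizedCauchyTransform, regularizedCauchyTransform,
    ← integral_sub (integrable_regularizedCauchyKernel_mul hv (by simpa using hb))
      (integrable_regularizedCauchyKernel_mul hv (by simpa using hb)), ← integral_div]
  congr 1 with τ
  rw [ofReal_poissonKernel_eq]
  ring

end CauchyTransform

lemma DifferentiableOn.contDiffOn_comp_clm {E : Type*} [NormedAddCommGroup E] [NormedSpace ℝ E]
    {f : ℂ → ℂ} {U : Set ℂ} (hf : DifferentiableOn ℂ f U) (hU : IsOpen U) (L : E →L[ℝ] ℂ)
    {s : Set E} (hs : Set.MapsTo L s U) {n : WithTop ℕ∞} :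
    ContDiffOn ℝ n (fun x => f (L x)) s :=
  ((hf.contDiffOn hU).restrict_scalars ℝ).comp L.contDiff.contDiffOn hs

lemma fderiv_comp_clm_apply {E : Type*} [NormedAddCommGroup E] [NormedSpace ℝ E] {f : ℂ → ℂ}
    (L : E →L[ℝ] ℂ) {y : E} (hf : DifferentiableAt ℂ f (L y)) (u : E) :
    fderiv ℝ (fun y => f (L y)) y u = L u * deriv f (L y) := by
  rw [show (fun y => f (L y)) = f ∘ L from rfl,
    (hf.hasDerivAt.comp_hasFDerivAt y L.hasFDerivAt).fderiv, smul_apply, smul_eq_mul, mul_comm]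

lemma lapPlaneC_comp_clm {f : ℂ → ℂ} {U : Set ℂ} (hf : DifferentiableOn ℂ f U) (hU : IsOpen U)
    (L : (ℝ × ℝ) →L[ℝ] ℂ) {x : ℝ × ℝ} (hx : L x ∈ U) :
    lapPlaneC (fun y => f (L y)) x = (L (1, 0) ^ 2 + L (0, 1) ^ 2) * deriv (deriv f) (L x) := by
  have hnear : ∀ᶠ y in 𝓝 x, L y ∈ U := L.continuous.continuousAt.preimage_mem_nhds (hU.mem_nhds hx)
  have hf' : DifferentiableAt ℂ (deriv f) (L x) := (hf.deriv hU).differentiableAt (hU.mem_nhds hx)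
  have hsecond (u : ℝ × ℝ) : fderiv ℝ (fun y => fderiv ℝ (fun y => f (L y)) y u) x u =
      L u * (L u * deriv (deriv f) (L x)) := by
    have hfirst : (fun y => fderiv ℝ (fun y => f (L y)) y u) =ᶠ[𝓝 x]
        fun y => L u * deriv f (L y) :=
      hnear.mono fun y hy => fderiv_comp_clm_apply L (hf.differentiableAt (hU.mem_nhds hy)) u
    have hg : DifferentiableAt ℝ (fun y => deriv f (L y)) x :=
      (hf'.restrictScalars ℝ).comp x L.differentiableAt
    rw [hfirst.fderiv_eq, fderiv_const_mul hg, smul_apply, fderiv_comp_clm_apply L hf',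
      smul_eq_mul]
  rw [lapPlaneC, hsecond, hsecond]
  ring

lemma lapPlaneC_sub {W₁ W₂ : ℝ × ℝ → ℂ} {x : ℝ × ℝ} (h₁ : ContDiffAt ℝ 2 W₁ x)
    (h₂ : ContDiffAt ℝ 2 W₂ x) :
    lapPlaneC (fun y => W₁ y - W₂ y) x = lapPlaneC W₁ x - lapPlaneC W₂ x := by
  have hnear : ∀ᶠ y in 𝓝 x,
      fderiv ℝ (fun y => W₁ y - W₂ y) y = fderiv ℝ W₁ y - fderiv ℝ W₂ y := by
    filter_upwards [h₁.eventually (by simp), h₂.eventually (by simp)] with y hy₁ hy₂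
    exact fderiv_sub (hy₁.differentiableAt two_ne_zero) (hy₂.differentiableAt two_ne_zero)
  have hdiff {V : ℝ × ℝ → ℂ} (hV : ContDiffAt ℝ 2 V x) (u : ℝ × ℝ) :
      DifferentiableAt ℝ (fun y => fderiv ℝ V y u) x :=
    ((hV.fderiv_right (m := 1) le_rfl).differentiableAt one_ne_zero).clm_apply
      (differentiableAt_const u)
  have hsecond (u : ℝ × ℝ) : fderiv ℝ (fun y => fderiv ℝ (fun y => W₁ y - W₂ y) y u) x u =
      fderiv ℝ (fun y => fderiv ℝ W₁ y u) x u - fderiv ℝ (fun y => fderiv ℝ W₂ y u) x u := by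
    have hfirst : (fun y => fderiv ℝ (fun y => W₁ y - W₂ y) y u) =ᶠ[𝓝 x]
        fun y => fderiv ℝ W₁ y u - fderiv ℝ W₂ y u :=
      hnear.mono fun y hy => congrArg (· u) hy
    rw [hfirst.fderiv_eq, fderiv_fun_sub (hdiff h₁ u) (hdiff h₂ u)]
    rfl
  rw [lapPlaneC, lapPlaneC, lapPlaneC, hsecond, hsecond]
  ring

/-- The double-layer potential of a bounded measurable density `v : ℝ → ℂ` is twice
continuously differentiable and harmonic off the real axis. -/
theorem double_layer_potential_harmonic
    (v : ℝ → ℂ) (hv : Measurable v) (M : ℝ) (hM : ∀ t : ℝ, ‖v t‖ ≤ M)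
    (W : ℝ × ℝ → ℂ)
    (hW : ∀ x : ℝ × ℝ, W x = (1 / (2 * Real.pi) : ℂ) *
      ∫ τ : ℝ, ((x.2 / ((x.1 - τ) ^ 2 + x.2 ^ 2) : ℝ) : ℂ) * v τ) :
    ContDiffOn ℝ 2 W {x : ℝ × ℝ | x.2 ≠ 0} ∧
      ∀ x : ℝ × ℝ, x.2 ≠ 0 → lapPlaneC W x = 0 := by
  have hU : IsOpen {w : ℂ | w.im ≠ 0} := isOpen_ne_fun continuous_im continuous_const
  have hS : IsOpen {x : ℝ × ℝ | x.2 ≠ 0} := isOpen_ne_fun continuous_snd continuous_const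
  have hvw : Integrable fun τ : ℝ => (1 + τ ^ 2)⁻¹ • v τ :=
    integrable_inv_one_add_sq.smul_bdd M hv.aestronglyMeasurable (ae_of_all _ hM)
  set g : ℂ → ℂ := fun w => (4 * Real.pi * I)⁻¹ * regularizedCauchyTransform v w
  have hg : DifferentiableOn ℂ g {w | w.im ≠ 0} :=
    (differentiableOn_regularizedCauchyTransform hvw).const_mul _
  set E : (ℝ × ℝ) →L[ℝ] ℂ := equivRealProdCLM.symm.toContinuousLinearMap
  set Ebar : (ℝ × ℝ) →L[ℝ] ℂ := (conjCLE : ℂ →L[ℝ] ℂ).comp E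
  have hE_apply (x : ℝ × ℝ) : E x = x.1 + x.2 * I := equivRealProdCLM_symm_apply x
  have hEbar_apply (x : ℝ × ℝ) : Ebar x = x.1 - x.2 * I := by
    simp [Ebar, hE_apply, sub_eq_add_neg]
  have hWg : W = fun x => g (E x) - g (Ebar x) := by
    funext x
    rw [hW, integral_poissonKernel_mul hvw, hE_apply, hEbar_apply]
    simp only [g]
    field_simp
    ring
  have hE : Set.MapsTo E {x | x.2 ≠ 0} {w | w.im ≠ 0} := fun x hx => by simpa [hE_apply] using hx
  have hEbar : Set.MapsTo Ebar {x | x.2 ≠ 0} {w | w.im ≠ 0} := fun x hx => by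
    simpa [hEbar_apply] using hx
  have hgE := hg.contDiffOn_comp_clm hU E hE (n := 2)
  have hgEbar := hg.contDiffOn_comp_clm hU Ebar hEbar (n := 2)
  refine ⟨hWg ▸ hgE.sub hgEbar, fun x hx => ?_⟩
  rw [hWg, lapPlaneC_sub (hgE.contDiffAt (hS.mem_nhds hx)) (hgEbar.contDiffAt (hS.mem_nhds hx)),
    lapPlaneC_comp_clm hg hU E (hE hx), lapPlaneC_comp_clm hg hU Ebar (hEbar hx)]
  simp [hE_apply, hEbar_apply]
end

section
/- Let v : ℝ → ℂ be a continuous function with compact support. Then the single-layer potential V(x₁,x₂) = (1/(2π)) ∫_ℝ log‖(x₁,x₂) − (τ,0)‖ v(τ) dτ is harmonic on ℝ² ∖ (ℝ × {0}): it is twice continuously differentiable there and ∂²V/∂x₁² + ∂²V/∂x₂² = 0 at every point (x₁,x₂) with x₂ ≠ 0. -/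
open MeasureTheory

/-!
Off the real axis, `log ‖z - τ‖ = (log (z - τ) + log (conj z - τ)) / 2` with the principal
branch, so the potential is `g z + g (conj z)` for the function
`g w = (4π)⁻¹ ∫ log (w - τ) v(τ) dτ`, which is holomorphic on `{im w ≠ 0}` by differentiation
under the integral sign. Both `(a, b) ↦ g (a + b i)` and `(a, b) ↦ g (a - b i)` are harmonic,
since for `f` holomorphic and `ε² = -1` the Laplacian of `(a, b) ↦ f (a + b ε)` is
`(1 + ε²) f''`.
-/

open Complex Filter Topology

section SecondDerivative

variable {𝕜 E F : Type*} [NontriviallyNormedField 𝕜] [NormedAddCommGroup E] [NormedSpace 𝕜 E]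
  [NormedAddCommGroup F] [NormedSpace 𝕜 F] {f g : E → F} {x : E}

theorem fderiv_fderiv_apply_add (hf : ContDiffAt 𝕜 2 f x) (hg : ContDiffAt 𝕜 2 g x) (e₁ e₂ : E) :
    fderiv 𝕜 (fun y => fderiv 𝕜 (f + g) y e₁) x e₂ =
      fderiv 𝕜 (fun y => fderiv 𝕜 f y e₁) x e₂ + fderiv 𝕜 (fun y => fderiv 𝕜 g y e₁) x e₂ := by
  have hfirst : (fun y => fderiv 𝕜 (f + g) y e₁) =ᶠ[𝓝 x]
      (fun y => fderiv 𝕜 f y e₁) + (fun y => fderiv 𝕜 g y e₁) := by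
    filter_upwards [hf.eventually (by simp), hg.eventually (by simp)] with y hfy hgy
    rw [fderiv_add (hfy.differentiableAt two_ne_zero) (hgy.differentiableAt two_ne_zero)]
    rfl
  have hdiff : ∀ {h : E → F}, ContDiffAt 𝕜 2 h x →
      DifferentiableAt 𝕜 (fun y => fderiv 𝕜 h y e₁) x := fun hh =>
    ((hh.fderiv_right (m := 1) le_rfl).clm_apply contDiffAt_const).differentiableAt one_ne_zero
  rw [hfirst.fderiv_eq, fderiv_add (hdiff hf) (hdiff hg)]
  rfl

end SecondDerivative

theorem Filter.EventuallyEq.lapPlaneC_eq {V W : ℝ × ℝ → ℂ} {x : ℝ × ℝ} (h : V =ᶠ[𝓝 x] W) :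
    lapPlaneC V x = lapPlaneC W x := by
  have hfirst : ∀ e : ℝ × ℝ, (fun y => fderiv ℝ V y e) =ᶠ[𝓝 x] (fun y => fderiv ℝ W y e) :=
    fun e => h.fderiv.fun_comp (· e)
  simp only [lapPlaneC, (hfirst _).fderiv_eq]

theorem lapPlaneC_add {V W : ℝ × ℝ → ℂ} {x : ℝ × ℝ} (hV : ContDiffAt ℝ 2 V x)
    (hW : ContDiffAt ℝ 2 W x) : lapPlaneC (V + W) x = lapPlaneC V x + lapPlaneC W x := by
  simp only [lapPlaneC, fderiv_fderiv_apply_add hV hW]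
  ring

noncomputable def planeMap (ε : ℂ) : ℝ × ℝ →L[ℝ] ℂ :=
  (ContinuousLinearMap.fst ℝ ℝ ℝ).smulRight 1 + (ContinuousLinearMap.snd ℝ ℝ ℝ).smulRight ε

@[simp]
theorem planeMap_apply (ε : ℂ) (x : ℝ × ℝ) : planeMap ε x = x.1 + x.2 * ε := by
  simp [planeMap, Complex.real_smul]

section Holomorphic

variable {f : ℂ → ℂ} {ε : ℂ} {x : ℝ × ℝ}

theorem fderiv_comp_planeMap_apply (hf : DifferentiableAt ℂ f (planeMap ε x)) (e : ℝ × ℝ) :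
    fderiv ℝ (f ∘ planeMap ε) x e = planeMap ε e * deriv f (planeMap ε x) := by
  rw [((hf.hasDerivAt.hasFDerivAt.restrictScalars ℝ).comp x (planeMap ε).hasFDerivAt).fderiv]
  simp [mul_comm]

theorem contDiffAt_comp_planeMap (hf : AnalyticAt ℂ f (planeMap ε x)) {n : WithTop ℕ∞} :
    ContDiffAt ℝ n (f ∘ planeMap ε) x :=
  hf.contDiffAt.restrict_scalars ℝ |>.comp x (planeMap ε).contDiff.contDiffAt

theorem lapPlaneC_comp_planeMap (hε : ε ^ 2 = -1) (hf : AnalyticAt ℂ f (planeMap ε x)) :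
    lapPlaneC (f ∘ planeMap ε) x = 0 := by
  have hnear : ∀ᶠ y in 𝓝 x, AnalyticAt ℂ f (planeMap ε y) :=
    (planeMap ε).continuous.continuousAt.eventually hf.eventually_analyticAt
  have hfirst : ∀ e : ℝ × ℝ, (fun y => fderiv ℝ (f ∘ planeMap ε) y e) =ᶠ[𝓝 x]
      (fun z => planeMap ε e * deriv f z) ∘ planeMap ε := by
    intro e
    filter_upwards [hnear] with y hy
    exact fderiv_comp_planeMap_apply hy.differentiableAt e
  have hf' : AnalyticAt ℂ (deriv f) (planeMap ε x) := hf.deriv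
  have hsecond : ∀ e₁ e₂ : ℝ × ℝ,
      fderiv ℝ ((fun z => planeMap ε e₁ * deriv f z) ∘ planeMap ε) x e₂ =
        planeMap ε e₂ * (planeMap ε e₁ * deriv (deriv f) (planeMap ε x)) := by
    intro e₁ e₂
    rw [fderiv_comp_planeMap_apply (hf'.differentiableAt.const_mul _),
      deriv_const_mul _ hf'.differentiableAt]
  have h₁ : planeMap ε (1, 0) = 1 := by simp
  have h₂ : planeMap ε (0, 1) = ε := by simp
  rw [lapPlaneC, (hfirst _).fderiv_eq, (hfirst _).fderiv_eq, hsecond, hsecond, h₁, h₂]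
  linear_combination deriv (deriv f) (planeMap ε x) * hε

end Holomorphic

open scoped ComplexConjugate

noncomputable def logPotential (v : ℝ → ℂ) (w : ℂ) : ℂ := ∫ τ : ℝ, log (w - τ) * v τ

theorem abs_im_le_norm_sub_ofReal (w : ℂ) (τ : ℝ) : |w.im| ≤ ‖w - τ‖ := by
  simpa using abs_im_le_norm (w - τ)

theorem sub_ofReal_mem_slitPlane {w : ℂ} (hw : w.im ≠ 0) (τ : ℝ) : w - τ ∈ slitPlane :=
  mem_slitPlane_iff.2 (Or.inr (by simpa using hw))

theorem ofReal_log_norm {z : ℂ} (hz : z.arg ≠ Real.pi) :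
    (Real.log ‖z‖ : ℂ) = (log z + log (conj z)) / 2 := by
  rw [log_conj z hz, add_conj, log_re]
  push_cast
  ring

section LogPotential

variable {v : ℝ → ℂ} {w : ℂ}

theorem integrable_log_sub_ofReal_mul (hv : Continuous v) (hsupp : HasCompactSupport v)
    (hw : w.im ≠ 0) : Integrable fun τ : ℝ => log (w - τ) * v τ := by
  have hlog : Continuous fun τ : ℝ => log (w - τ) :=
    (continuous_const.sub continuous_ofReal).clog (sub_ofReal_mem_slitPlane hw)
  exact (hlog.mul hv).integrable_of_hasCompactSupport hsupp.mul_left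

theorem hasDerivAt_logPotential (hv : Continuous v) (hsupp : HasCompactSupport v)
    (hw : w.im ≠ 0) : HasDerivAt (logPotential v) (∫ τ : ℝ, (w - τ)⁻¹ * v τ) w := by
  set r := |w.im| / 2 with hr_def
  have hr : 0 < r := half_pos (abs_pos.2 hw)
  -- on the ball of radius `r` around `w`, every `z - τ` stays at distance `> r` from `0`
  have hball : ∀ z ∈ Metric.ball w r, r < |z.im| := by
    intro z hz
    have hdist : |w.im - z.im| < r := by
      simpa [abs_sub_comm] using (abs_im_le_norm (z - w)).trans_lt (mem_ball_iff_norm.1 hz)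
    have := abs_sub_abs_le_abs_sub w.im z.im
    linarith [hr_def]
  have him : ∀ z ∈ Metric.ball w r, z.im ≠ 0 := fun z hz =>
    abs_pos.1 (hr.trans (hball z hz))
  refine (hasDerivAt_integral_of_dominated_loc_of_deriv_le
    (F := fun z τ => log (z - τ) * v τ)
    (F' := fun z τ => (z - τ)⁻¹ * v τ) (bound := fun τ => r⁻¹ * ‖v τ‖)
    (Metric.ball_mem_nhds w hr) ?_ (integrable_log_sub_ofReal_mul hv hsupp hw) ?_ ?_ ?_ ?_).2
  · filter_upwards [Metric.ball_mem_nhds w hr] with z hz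
    exact (integrable_log_sub_ofReal_mul hv hsupp (him z hz)).aestronglyMeasurable
  · refine (((continuous_const.sub continuous_ofReal).inv₀ fun τ => ?_).mul hv).aestronglyMeasurable
    exact slitPlane_ne_zero (sub_ofReal_mem_slitPlane hw τ)
  · refine .of_forall fun τ z hz => ?_
    rw [norm_mul, norm_inv]
    gcongr
    exact (hball z hz).le.trans (abs_im_le_norm_sub_ofReal z τ)
  · exact (hv.norm.integrable_of_hasCompactSupport hsupp.norm).const_mul _
  · refine .of_forall fun τ z hz => ?_
    simpa using (((hasDerivAt_id z).sub_const (τ : ℂ)).clog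
      (sub_ofReal_mem_slitPlane (him z hz) τ)).mul_const (v τ)

theorem analyticOnNhd_logPotential (hv : Continuous v) (hsupp : HasCompactSupport v) :
    AnalyticOnNhd ℂ (logPotential v) {w : ℂ | w.im ≠ 0} :=
  DifferentiableOn.analyticOnNhd (fun _ hw =>
      (hasDerivAt_logPotential hv hsupp hw).differentiableAt.differentiableWithinAt)
    (isOpen_ne.preimage continuous_im)

theorem integral_log_norm_sub_ofReal_mul (hv : Continuous v) (hsupp : HasCompactSupport v)
    (hw : w.im ≠ 0) :
    ∫ τ : ℝ, (Real.log ‖w - τ‖ : ℂ) * v τ = (logPotential v w + logPotential v (conj w)) / 2 := by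
  have hw' : (conj w).im ≠ 0 := by simpa using hw
  have hpointwise : ∀ τ : ℝ, (Real.log ‖w - τ‖ : ℂ) * v τ =
      (log (w - τ) * v τ + log (conj w - τ) * v τ) / 2 := by
    intro τ
    rw [ofReal_log_norm (slitPlane_arg_ne_pi (sub_ofReal_mem_slitPlane hw τ)), map_sub,
      conj_ofReal]
    ring
  simp_rw [hpointwise]
  rw [integral_div, integral_add (integrable_log_sub_ofReal_mul hv hsupp hw)
    (integrable_log_sub_ofReal_mul hv hsupp hw')]
  rfl

theorem integral_log_sqrt_mul_eq (hv : Continuous v) (hsupp : HasCompactSupport v)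
    {x : ℝ × ℝ} (hx : x.2 ≠ 0) :
    ∫ τ : ℝ, (Real.log (Real.sqrt ((x.1 - τ) ^ 2 + x.2 ^ 2)) : ℂ) * v τ =
      (logPotential v (planeMap I x) + logPotential v (planeMap (-I) x)) / 2 := by
  have hnorm : ∀ τ : ℝ, Real.sqrt ((x.1 - τ) ^ 2 + x.2 ^ 2) = ‖planeMap I x - τ‖ := by
    intro τ
    rw [← norm_add_mul_I, planeMap_apply]
    push_cast
    ring_nf
  have hconj : conj (planeMap I x) = planeMap (-I) x := by
    apply Complex.ext <;> simp
  simp_rw [hnorm]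
  rw [integral_log_norm_sub_ofReal_mul hv hsupp (by simpa using hx), hconj]

end LogPotential

/-- The single-layer potential of a continuous compactly supported density `v : ℝ → ℂ` is
twice continuously differentiable and harmonic off the real axis. -/
theorem single_layer_potential_harmonic
    (v : ℝ → ℂ) (hv : Continuous v) (hsupp : HasCompactSupport v)
    (V : ℝ × ℝ → ℂ)
    (hV : ∀ x : ℝ × ℝ, V x = (1 / (2 * Real.pi) : ℂ) *
      ∫ τ : ℝ, (Real.log (Real.sqrt ((x.1 - τ) ^ 2 + x.2 ^ 2)) : ℂ) * v τ) :
    ContDiffOn ℝ 2 V {x : ℝ × ℝ | x.2 ≠ 0} ∧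
      ∀ x : ℝ × ℝ, x.2 ≠ 0 → lapPlaneC V x = 0 := by
  set g : ℂ → ℂ := fun w => (4 * Real.pi : ℂ)⁻¹ * logPotential v w
  have hg : AnalyticOnNhd ℂ g {w : ℂ | w.im ≠ 0} :=
    analyticOnNhd_const.mul (analyticOnNhd_logPotential hv hsupp)
  have hgI : ∀ x : ℝ × ℝ, x.2 ≠ 0 → AnalyticAt ℂ g (planeMap I x) := fun x hx =>
    hg _ (by simpa using hx)
  have hgNegI : ∀ x : ℝ × ℝ, x.2 ≠ 0 → AnalyticAt ℂ g (planeMap (-I) x) := fun x hx =>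
    hg _ (by simpa using hx)
  have hVW : ∀ x : ℝ × ℝ, x.2 ≠ 0 → V x = (g ∘ planeMap I + g ∘ planeMap (-I)) x := by
    intro x hx
    rw [hV, integral_log_sqrt_mul_eq hv hsupp hx]
    simp only [g, Pi.add_apply, Function.comp_apply]
    ring
  refine ⟨fun x hx => ?_, fun x hx => ?_⟩
  · exact ((contDiffAt_comp_planeMap (hgI x hx)).add
      (contDiffAt_comp_planeMap (hgNegI x hx))).contDiffWithinAt.congr hVW (hVW x hx)
  · have hVW' : V =ᶠ[𝓝 x] g ∘ planeMap I + g ∘ planeMap (-I) :=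
      eventually_of_mem ((isOpen_ne.preimage continuous_snd).mem_nhds hx) hVW
    rw [hVW'.lapPlaneC_eq, lapPlaneC_add (contDiffAt_comp_planeMap (hgI x hx))
      (contDiffAt_comp_planeMap (hgNegI x hx)), lapPlaneC_comp_planeMap (by simp) (hgI x hx),
      lapPlaneC_comp_planeMap (by simp) (hgNegI x hx), add_zero]
end

section
/- Let v : ℝ → ℂ be a continuous function with compact support, and let V(x₁,x₂) = (1/(2π)) ∫_ℝ log‖(x₁,x₂) − (τ,0)‖ v(τ) dτ be its single-layer potential. Then for every (x₁,x₂) with x₂ ≠ 0 one has ∂V/∂x₂(x₁,x₂) = (1/(2π)) ∫_ℝ x₂ v(τ) / ((x₁−τ)² + x₂²) dτ, and consequently the normal derivative −∂₂V satisfies the Plemelj jump relations: lim_{x₂→0⁺} (−∂V/∂x₂)(x₁,x₂) = −v(x₁)/2 and lim_{x₂→0⁻} (−∂V/∂x₂)(x₁,x₂) = v(x₁)/2 for every x₁ ∈ ℝ. -/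
open MeasureTheory Filter Topology

/-!
Off the real axis the gradient of `x ↦ log ‖x - (τ, 0)‖` is bounded by `2 / |x₂|`, uniformly in
`τ`, so the single-layer potential may be differentiated under the integral sign; its
`x₂`-derivative is the Poisson integral `∫ x₂ v(τ) / ((x₁ - τ)² + x₂²) dτ`. The substitution
`τ = x₁ + x₂ u` turns this into `sign x₂ · ∫ v(x₁ + x₂ u) / (1 + u²) du`, which tends to
`± π v(x₁)` by dominated convergence, since `∫ (1 + u²)⁻¹ du = π`.
-/

section

variable {E : Type*} [NormedAddCommGroup E] [NormedSpace ℝ E]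

noncomputable def logKernelGrad (τ : ℝ) (x : ℝ × ℝ) : ℝ × ℝ →L[ℝ] ℝ :=
  ((x.1 - τ) ^ 2 + x.2 ^ 2)⁻¹ •
    ((x.1 - τ) • ContinuousLinearMap.fst ℝ ℝ ℝ + x.2 • ContinuousLinearMap.snd ℝ ℝ ℝ)

theorem hasFDerivAt_log_sqrt_dist (τ : ℝ) {x : ℝ × ℝ} (hx : (x.1 - τ) ^ 2 + x.2 ^ 2 ≠ 0) :
    HasFDerivAt (fun y : ℝ × ℝ => Real.log √((y.1 - τ) ^ 2 + y.2 ^ 2)) (logKernelGrad τ x) x := by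
  set L := (x.1 - τ) • ContinuousLinearMap.fst ℝ ℝ ℝ + x.2 • ContinuousLinearMap.snd ℝ ℝ ℝ
  have hq : HasFDerivAt (fun y : ℝ × ℝ => (y.1 - τ) ^ 2 + y.2 ^ 2) ((2 : ℝ) • L) x :=
    ((((hasFDerivAt_fst (𝕜 := ℝ) (p := x)).sub_const τ).pow 2).add
      ((hasFDerivAt_snd (𝕜 := ℝ) (p := x)).pow 2)).congr_fderiv (by norm_num [L]; module)
  have hs : √((x.1 - τ) ^ 2 + x.2 ^ 2) ≠ 0 := by positivity
  refine ((hq.sqrt hx).log hs).congr_fderiv ?_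
  rw [logKernelGrad, smul_smul, smul_smul]
  congr 1
  field_simp
  exact (Real.sq_sqrt (by positivity)).symm

theorem norm_logKernelGrad_le (τ : ℝ) {x : ℝ × ℝ} (hx : x.2 ≠ 0) :
    ‖logKernelGrad τ x‖ ≤ 2 / |x.2| := by
  calc ‖logKernelGrad τ x‖ ≤ ((x.1 - τ) ^ 2 + x.2 ^ 2)⁻¹ * (|x.1 - τ| + |x.2|) := by
        refine (norm_smul_le (β := ℝ × ℝ →L[ℝ] ℝ) _ _).trans ?_
        rw [Real.norm_of_nonneg (by positivity)]
        gcongr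
        refine (norm_add_le _ _).trans (add_le_add ?_ ?_) <;>
          rw [norm_smul, Real.norm_eq_abs] <;> refine mul_le_of_le_one_right (abs_nonneg _) ?_
        exacts [ContinuousLinearMap.norm_fst_le ℝ ℝ ℝ, ContinuousLinearMap.norm_snd_le ℝ ℝ ℝ]
    _ ≤ 2 / |x.2| := by
        rw [inv_mul_eq_div, div_le_div_iff₀ (by positivity) (by positivity)]
        nlinarith [sq_abs (x.1 - τ), sq_abs x.2, two_mul_le_add_sq |x.1 - τ| |x.2|,
          abs_nonneg (x.1 - τ), abs_nonneg x.2]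

theorem abs_snd_div_two_le_of_mem_ball {x y : ℝ × ℝ} (hy : y ∈ Metric.ball x (|x.2| / 2)) :
    |x.2| / 2 ≤ |y.2| := by
  have hdist : dist y.2 x.2 < |x.2| / 2 :=
    (Prod.dist_eq.ge.trans' (le_max_right _ _)).trans_lt hy
  rw [Real.dist_eq] at hdist
  linarith [abs_sub_abs_le_abs_sub x.2 y.2, abs_sub_comm x.2 y.2]

theorem continuous_log_sqrt_dist_smul {v : ℝ → E} (hv : Continuous v) {x : ℝ × ℝ}
    (hx : x.2 ≠ 0) : Continuous fun τ => Real.log √((x.1 - τ) ^ 2 + x.2 ^ 2) • v τ := by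
  fun_prop (disch := intro; positivity)

theorem continuous_logKernelGrad_smulRight {v : ℝ → E} (hv : Continuous v) {x : ℝ × ℝ}
    (hx : x.2 ≠ 0) : Continuous fun τ => (logKernelGrad τ x).smulRight (v τ) := by
  unfold logKernelGrad
  fun_prop (disch := intro; positivity)

theorem norm_logKernelGrad_smulRight_le (τ : ℝ) (c : E) {x : ℝ × ℝ} (hx : x.2 ≠ 0) :
    ‖(logKernelGrad τ x).smulRight c‖ ≤ 2 / |x.2| * ‖c‖ := by
  rw [ContinuousLinearMap.norm_smulRight_apply]
  gcongr
  exact norm_logKernelGrad_le τ hx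

theorem hasFDerivAt_integral_log_sqrt_dist_smul {v : ℝ → E} (hv : Continuous v)
    (hsupp : HasCompactSupport v) {x : ℝ × ℝ} (hx : x.2 ≠ 0) :
    HasFDerivAt (fun y : ℝ × ℝ => ∫ τ, Real.log √((y.1 - τ) ^ 2 + y.2 ^ 2) • v τ)
      (∫ τ, (logKernelGrad τ x).smulRight (v τ)) x := by
  have hball : ∀ y ∈ Metric.ball x (|x.2| / 2), |x.2| / 2 ≤ |y.2| ∧ y.2 ≠ 0 := fun y hy =>
    have h := abs_snd_div_two_le_of_mem_ball hy
    ⟨h, abs_pos.1 ((by positivity : 0 < |x.2| / 2).trans_le h)⟩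
  refine hasFDerivAt_integral_of_dominated_of_fderiv_le (bound := fun τ => 4 / |x.2| * ‖v τ‖)
    (F' := fun y τ => (logKernelGrad τ y).smulRight (v τ))
    (Metric.ball_mem_nhds x (by positivity : 0 < |x.2| / 2)) ?_
    ((continuous_log_sqrt_dist_smul hv hx).integrable_of_hasCompactSupport hsupp.smul_left)
    (continuous_logKernelGrad_smulRight hv hx).aestronglyMeasurable
    (ae_of_all _ fun τ y hy => ?_)
    ((hv.norm.integrable_of_hasCompactSupport hsupp.norm).const_mul _)
    (ae_of_all _ fun τ y hy => ?_)
  · filter_upwards [Metric.ball_mem_nhds x (by positivity : 0 < |x.2| / 2)] with y hy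
    exact (continuous_log_sqrt_dist_smul hv (hball y hy).2).aestronglyMeasurable
  · obtain ⟨hy_abs, hy_ne⟩ := hball y hy
    refine (norm_logKernelGrad_smulRight_le τ (v τ) hy_ne).trans ?_
    gcongr ?_ * _
    rw [div_le_div_iff₀ (by positivity) (by positivity)]
    linarith
  · have hy_ne := (hball y hy).2
    exact (hasFDerivAt_log_sqrt_dist τ (by positivity)).smul_const (v τ)

theorem fderiv_integral_log_sqrt_dist_smul_apply {v : ℝ → E} (hv : Continuous v)
    (hsupp : HasCompactSupport v) {x : ℝ × ℝ} (hx : x.2 ≠ 0) :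
    fderiv ℝ (fun y : ℝ × ℝ => ∫ τ, Real.log √((y.1 - τ) ^ 2 + y.2 ^ 2) • v τ) x (0, 1) =
      ∫ τ, (x.2 / ((x.1 - τ) ^ 2 + x.2 ^ 2)) • v τ := by
  have hint : Integrable fun τ => (logKernelGrad τ x).smulRight (v τ) :=
    (continuous_logKernelGrad_smulRight hv hx).integrable_of_hasCompactSupport
      (hsupp.mono fun τ hτ h0 => hτ (by simp [h0]))
  rw [(hasFDerivAt_integral_log_sqrt_dist_smul hv hsupp hx).fderiv,
    ContinuousLinearMap.integral_apply hint]
  simp [logKernelGrad, div_eq_inv_mul]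

theorem integral_poisson_kernel_smul_eq (v : ℝ → E) (x₁ : ℝ) {t : ℝ} (ht : t ≠ 0) :
    ∫ τ, (t / ((x₁ - τ) ^ 2 + t ^ 2)) • v τ =
      (|t| / t) • ∫ u, (1 + u ^ 2)⁻¹ • v (x₁ + t * u) := by
  set g : ℝ → E := fun τ => (t / ((x₁ - τ) ^ 2 + t ^ 2)) • v τ
  have hg : ∀ u, g (x₁ + t * u) = t⁻¹ • (1 + u ^ 2)⁻¹ • v (x₁ + t * u) := fun u => by
    simp only [g, smul_smul]
    congr 1
    field_simp
    ring
  calc ∫ τ, g τ = ∫ u, g (x₁ + u) := (integral_add_left_eq_self g x₁).symm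
    _ = |t| • ∫ u, g (x₁ + t * u) := by
      rw [Measure.integral_comp_mul_left (fun u => g (x₁ + u)) t, smul_smul, abs_inv,
        mul_inv_cancel₀ (abs_ne_zero.2 ht), one_smul]
    _ = (|t| / t) • ∫ u, (1 + u ^ 2)⁻¹ • v (x₁ + t * u) := by
      simp_rw [hg, integral_smul, smul_smul, div_eq_mul_inv]

variable [CompleteSpace E]

theorem tendsto_integral_inv_one_add_sq_smul_comp {v : ℝ → E} (hv : Continuous v) {C : ℝ}
    (hC : ∀ τ, ‖v τ‖ ≤ C) (x₁ : ℝ) :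
    Tendsto (fun t : ℝ => ∫ u, (1 + u ^ 2)⁻¹ • v (x₁ + t * u)) (𝓝 0) (𝓝 (Real.pi • v x₁)) := by
  have h := tendsto_integral_filter_of_dominated_convergence (fun u : ℝ => (1 + u ^ 2)⁻¹ * C)
    (Eventually.of_forall fun t => (by fun_prop (disch := intro; positivity) :
      Continuous fun u : ℝ => (1 + u ^ 2)⁻¹ • v (x₁ + t * u)).aestronglyMeasurable)
    (Eventually.of_forall fun t => ae_of_all _ fun u => by
      rw [norm_smul, Real.norm_of_nonneg (by positivity)]
      gcongr
      exact hC _)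
    (integrable_inv_one_add_sq.mul_const C)
    (ae_of_all _ fun u => (by fun_prop : Continuous fun t : ℝ => (1 + u ^ 2)⁻¹ • v (x₁ + t * u))
      |>.tendsto' 0 ((1 + u ^ 2)⁻¹ • v x₁) (by simp))
  rwa [integral_smul_const, integral_univ_inv_one_add_sq] at h

theorem tendsto_integral_poisson_kernel_smul_nhdsGT {v : ℝ → E} (hv : Continuous v) {C : ℝ}
    (hC : ∀ τ, ‖v τ‖ ≤ C) (x₁ : ℝ) :
    Tendsto (fun t : ℝ => ∫ τ, (t / ((x₁ - τ) ^ 2 + t ^ 2)) • v τ) (𝓝[>] 0)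
      (𝓝 (Real.pi • v x₁)) := by
  refine ((tendsto_integral_inv_one_add_sq_smul_comp hv hC x₁).mono_left
    nhdsWithin_le_nhds).congr' (eventually_nhdsWithin_of_forall fun t (ht : 0 < t) => ?_)
  dsimp only
  rw [integral_poisson_kernel_smul_eq v x₁ ht.ne', abs_of_pos ht, div_self ht.ne', one_smul]

theorem tendsto_integral_poisson_kernel_smul_nhdsLT {v : ℝ → E} (hv : Continuous v) {C : ℝ}
    (hC : ∀ τ, ‖v τ‖ ≤ C) (x₁ : ℝ) :
    Tendsto (fun t : ℝ => ∫ τ, (t / ((x₁ - τ) ^ 2 + t ^ 2)) • v τ) (𝓝[<] 0)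
      (𝓝 (-(Real.pi • v x₁))) := by
  refine ((tendsto_integral_inv_one_add_sq_smul_comp hv hC x₁).neg.mono_left
    nhdsWithin_le_nhds).congr' (eventually_nhdsWithin_of_forall fun t (ht : t < 0) => ?_)
  dsimp only
  rw [integral_poisson_kernel_smul_eq v x₁ ht.ne, abs_of_neg ht, neg_div, div_self ht.ne,
    neg_one_smul]

end

theorem fderiv_apply_snd_eq_integral_poisson_kernel {v : ℝ → ℂ} (hv : Continuous v)
    (hsupp : HasCompactSupport v) {V : ℝ × ℝ → ℂ} {c : ℂ}
    (hV : ∀ x : ℝ × ℝ, V x = c * ∫ τ, (Real.log √((x.1 - τ) ^ 2 + x.2 ^ 2) : ℂ) * v τ)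
    {x₁ x₂ : ℝ} (hx₂ : x₂ ≠ 0) :
    fderiv ℝ V (x₁, x₂) (0, 1) = c * ∫ τ, (x₂ / ((x₁ - τ) ^ 2 + x₂ ^ 2)) • v τ := by
  have hV' : V = fun x => c * ∫ τ, Real.log √((x.1 - τ) ^ 2 + x.2 ^ 2) • v τ := by
    funext x
    simp only [hV, Complex.real_smul]
  rw [hV', fderiv_const_mul (hasFDerivAt_integral_log_sqrt_dist_smul hv hsupp
      (x := (x₁, x₂)) hx₂).differentiableAt, smul_apply,
    fderiv_integral_log_sqrt_dist_smul_apply hv hsupp hx₂, smul_eq_mul]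

/-- For the single-layer potential `V` of a continuous compactly supported density `v`, the
normal derivative `∂₂V` off the real axis is the double-layer (Poisson) potential of `v`, and
`−∂₂V` satisfies the Plemelj jump relations at the boundary. -/
theorem single_layer_normal_derivative_jump_relations
    (v : ℝ → ℂ) (hv : Continuous v) (hsupp : HasCompactSupport v)
    (V : ℝ × ℝ → ℂ)
    (hV : ∀ x : ℝ × ℝ, V x = (1 / (2 * Real.pi) : ℂ) *
      ∫ τ : ℝ, (Real.log (Real.sqrt ((x.1 - τ) ^ 2 + x.2 ^ 2)) : ℂ) * v τ) :
    (∀ x₁ x₂ : ℝ, x₂ ≠ 0 →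
      fderiv ℝ V (x₁, x₂) ((0:ℝ), (1:ℝ)) =
        (1 / (2 * Real.pi) : ℂ) *
          ∫ τ : ℝ, ((x₂ / ((x₁ - τ) ^ 2 + x₂ ^ 2) : ℝ) : ℂ) * v τ) ∧
    (∀ x₁ : ℝ,
      Tendsto (fun x₂ : ℝ => -(fderiv ℝ V (x₁, x₂) ((0:ℝ), (1:ℝ))))
        (nhdsWithin 0 (Set.Ioi 0)) (nhds (-(v x₁) / 2)) ∧
      Tendsto (fun x₂ : ℝ => -(fderiv ℝ V (x₁, x₂) ((0:ℝ), (1:ℝ))))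
        (nhdsWithin 0 (Set.Iio 0)) (nhds (v x₁ / 2))) := by
  have hderiv := fun x₁ {x₂ : ℝ} (hx₂ : x₂ ≠ 0) =>
    fderiv_apply_snd_eq_integral_poisson_kernel hv hsupp hV (x₁ := x₁) hx₂
  obtain ⟨C, hC⟩ := hsupp.exists_bound_of_continuous hv
  refine ⟨fun x₁ x₂ hx₂ => by simpa only [Complex.real_smul] using hderiv x₁ hx₂,
    fun x₁ => ⟨?_, ?_⟩⟩
  · have hval : -((1 / (2 * Real.pi) : ℂ) * (Real.pi • v x₁)) = -(v x₁) / 2 := by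
      rw [Complex.real_smul]
      field_simp
    rw [← hval]
    refine (((tendsto_integral_poisson_kernel_smul_nhdsGT hv hC x₁).const_mul _).neg).congr' ?_
    filter_upwards [self_mem_nhdsWithin] with x₂ (hx₂ : 0 < x₂)
    rw [hderiv x₁ hx₂.ne']
  · have hval : -((1 / (2 * Real.pi) : ℂ) * -(Real.pi • v x₁)) = v x₁ / 2 := by
      rw [Complex.real_smul]
      field_simp
    rw [← hval]
    refine (((tendsto_integral_poisson_kernel_smul_nhdsLT hv hC x₁).const_mul _).neg).congr' ?_
    filter_upwards [self_mem_nhdsWithin] with x₂ (hx₂ : x₂ < 0)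
    rw [hderiv x₁ hx₂.ne]
end

section
/- Let c ∈ ℂ with c ∉ (−∞,0] (i.e. c is not zero and not a negative real number), and let z ∈ ℂ with 0 < Re z < 1. Then ∫₀^∞ t^{z−1}/(t + c) dt = π c^{z−1} / sin(π z), where the integral converges absolutely. Equivalently, the Mellin symbol of the operator K¹_c with kernel (1/π)(t+c)⁻¹ at the point z equals c^{z−1}/sin(π z). -/
/-!
For `c = 1` the substitution `t = u / (1 - u)` turns the integral into the Beta integral
`B(z, 1 - z) = Γ(z) Γ(1 - z) = π / sin (π z)`, and the scaling `t ↦ r t` gives the formula for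
every `c = r > 0`. On the slit plane `‖t + c‖ ≥ κ (t + 1)` for `t ≥ 0`, locally uniformly in `c`,
so the integrand is dominated by a multiple of the one for `c = 1`; this gives absolute
convergence and, by differentiation under the integral sign, holomorphy in `c`. Both sides are
then holomorphic on the connected slit plane and agree on the positive reals, hence everywhere.
-/

open MeasureTheory Set Filter Topology
open scoped Real

lemma image_div_one_sub_Ioo : (fun u : ℝ => u / (1 - u)) '' Ioo 0 1 = Ioi 0 := by
  ext t
  constructor
  · rintro ⟨u, ⟨hu0, hu1⟩, rfl⟩
    exact div_pos hu0 (sub_pos.mpr hu1)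
  · intro (ht : 0 < t)
    refine ⟨t / (1 + t), ⟨by positivity, (div_lt_one (by positivity)).mpr (by linarith)⟩, ?_⟩
    field_simp
    ring

lemma hasDerivAt_div_one_sub {u : ℝ} (hu : u ≠ 1) :
    HasDerivAt (fun u : ℝ => u / (1 - u)) ((1 - u) ^ 2)⁻¹ u := by
  have h1u : 1 - u ≠ 0 := sub_ne_zero.mpr hu.symm
  refine ((hasDerivAt_id' u).fun_div ((hasDerivAt_const u 1).fun_sub (hasDerivAt_id' u))
    h1u).congr_deriv ?_
  ring

lemma injOn_div_one_sub : InjOn (fun u : ℝ => u / (1 - u)) (Ioo 0 1) := by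
  intro a ⟨_, ha⟩ b ⟨_, hb⟩ h
  have : 1 - a ≠ 0 := by linarith
  have : 1 - b ≠ 0 := by linarith
  field_simp at h
  linarith

section

variable {E : Type*} [NormedAddCommGroup E] [NormedSpace ℝ E]

lemma integrableOn_Ioi_zero_iff_comp_div_one_sub (f : ℝ → E) :
    IntegrableOn f (Ioi 0) ↔
      IntegrableOn (fun u : ℝ => ((1 - u) ^ 2)⁻¹ • f (u / (1 - u))) (Ioo 0 1) := by
  rw [← image_div_one_sub_Ioo, integrableOn_image_iff_integrableOn_abs_deriv_smul measurableSet_Ioo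
    (fun u hu => (hasDerivAt_div_one_sub hu.2.ne).hasDerivWithinAt) injOn_div_one_sub]
  simp only [abs_inv, abs_sq]

lemma integral_Ioi_zero_eq_integral_comp_div_one_sub (f : ℝ → E) :
    ∫ t in Ioi 0, f t = ∫ u in Ioo 0 1, ((1 - u) ^ 2)⁻¹ • f (u / (1 - u)) := by
  rw [← image_div_one_sub_Ioo, integral_image_eq_integral_abs_deriv_smul measurableSet_Ioo
    (fun u hu => (hasDerivAt_div_one_sub hu.2.ne).hasDerivWithinAt) injOn_div_one_sub]
  simp only [abs_inv, abs_sq]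

end

namespace Complex

-- The exponent `(1 - z) - 1` is the shape of the integrand of `betaIntegral z (1 - z)`.
lemma inv_one_sub_sq_smul_cpow_div_add_one {u : ℝ} (hu : u ∈ Ioo 0 1) (z : ℂ) :
    ((1 - u) ^ 2)⁻¹ • (((u / (1 - u) : ℝ) : ℂ) ^ (z - 1) / ((u / (1 - u) : ℝ) + 1)) =
      (u : ℂ) ^ (z - 1) * (1 - (u : ℂ)) ^ ((1 - z) - 1) := by
  have hu1 : (0 : ℝ) < 1 - u := sub_pos.mpr hu.2
  have hu1' : (1 : ℂ) - u ≠ 0 := by exact_mod_cast hu1.ne'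
  rw [ofReal_div, div_cpow_ofReal_nonneg hu.1.le hu1.le, real_smul, sub_sub_cancel_left, cpow_neg,
    ofReal_sub, ofReal_one, cpow_sub _ _ hu1', cpow_one]
  push_cast
  field_simp
  ring

lemma integrableOn_cpow_div_add_one {z : ℂ} (hz0 : 0 < z.re) (hz1 : z.re < 1) :
    IntegrableOn (fun t : ℝ => (t : ℂ) ^ (z - 1) / ((t : ℂ) + 1)) (Ioi 0) := by
  have hbeta := betaIntegral_convergent hz0 (show 0 < (1 - z).re by simpa)
  rw [intervalIntegrable_iff_integrableOn_Ioo_of_le zero_le_one] at hbeta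
  rw [integrableOn_Ioi_zero_iff_comp_div_one_sub]
  exact hbeta.congr_fun (fun u hu => (inv_one_sub_sq_smul_cpow_div_add_one hu z).symm)
    measurableSet_Ioo

lemma integral_cpow_div_add_one {z : ℂ} (hz0 : 0 < z.re) (hz1 : z.re < 1) :
    ∫ t in Ioi (0 : ℝ), (t : ℂ) ^ (z - 1) / ((t : ℂ) + 1) = π / sin (π * z) := by
  have hGamma := Gamma_mul_Gamma_eq_betaIntegral hz0 (show 0 < (1 - z).re by simpa)
  rw [add_sub_cancel, Gamma_one, one_mul, Gamma_mul_Gamma_one_sub] at hGamma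
  rw [hGamma, integral_Ioi_zero_eq_integral_comp_div_one_sub,
    setIntegral_congr_fun measurableSet_Ioo fun u hu => inv_one_sub_sq_smul_cpow_div_add_one hu z,
    betaIntegral, intervalIntegral.integral_of_le zero_le_one, integral_Ioc_eq_integral_Ioo]

lemma integral_cpow_div_add_ofReal (z : ℂ) {r : ℝ} (hr : 0 < r) :
    ∫ t in Ioi (0 : ℝ), (t : ℂ) ^ (z - 1) / ((t : ℂ) + r) =
      (r : ℂ) ^ (z - 1) * ∫ t in Ioi (0 : ℝ), (t : ℂ) ^ (z - 1) / ((t : ℂ) + 1) := by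
  have hr' : (r : ℂ) ≠ 0 := ofReal_ne_zero.mpr hr.ne'
  have hscale := integral_comp_mul_left_Ioi' (fun t : ℝ => (t : ℂ) ^ (z - 1) / ((t : ℂ) + r)) 0 hr
  rw [mul_zero] at hscale
  rw [← hscale, ← integral_const_mul, ← integral_smul]
  refine setIntegral_congr_fun measurableSet_Ioi fun t (ht : 0 < t) => ?_
  rw [ofReal_mul, mul_cpow_ofReal_nonneg hr.le ht.le, real_smul]
  field_simp

lemma exists_pos_mul_le_norm_ofReal_add {c : ℂ} (hc : c ∈ slitPlane) :
    ∃ κ > 0, ∀ t : ℝ, 0 ≤ t → κ * (t + 1) ≤ ‖(t : ℂ) + c‖ := by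
  obtain ⟨ε, hε, hε_le⟩ : ∃ ε > 0, ∀ t : ℝ, 0 ≤ t → ε ≤ ‖(t : ℂ) + c‖ := by
    rcases mem_slitPlane_iff.mp hc with hre | him
    · refine ⟨c.re, hre, fun t ht => ?_⟩
      calc c.re ≤ ((t : ℂ) + c).re := by simpa using ht
        _ ≤ ‖(t : ℂ) + c‖ := re_le_norm _
    · refine ⟨|c.im|, abs_pos.mpr him, fun t _ => ?_⟩
      simpa using abs_im_le_norm ((t : ℂ) + c)
  refine ⟨ε / (ε + ‖c‖ + 1), by positivity, fun t ht => ?_⟩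
  have h_far : t - ‖c‖ ≤ ‖(t : ℂ) + c‖ := by
    simpa [abs_of_nonneg ht] using norm_sub_norm_le (t : ℂ) (-c)
  rw [div_mul_eq_mul_div, div_le_iff₀ (by positivity)]
  nlinarith [hε_le t ht, norm_nonneg c]

lemma exists_pos_eventually_mul_le_norm_ofReal_add {c : ℂ} (hc : c ∈ slitPlane) :
    ∃ κ > 0, ∀ᶠ w in 𝓝 c, ∀ t : ℝ, 0 ≤ t → κ * (t + 1) ≤ ‖(t : ℂ) + w‖ := by
  obtain ⟨κ, hκ, hκ_le⟩ := exists_pos_mul_le_norm_ofReal_add hc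
  refine ⟨κ / 2, half_pos hκ, ?_⟩
  filter_upwards [Metric.ball_mem_nhds c (half_pos hκ)] with w hw t ht
  have h_triangle : ‖(t : ℂ) + c‖ - ‖c - w‖ ≤ ‖(t : ℂ) + w‖ := by
    simpa only [add_sub_assoc, sub_sub_cancel] using
      norm_sub_norm_le ((t : ℂ) + c) (c - w)
  rw [Metric.mem_ball, dist_eq, ← norm_neg, neg_sub] at hw
  nlinarith [hκ_le t ht]

lemma norm_ofReal_add_one {t : ℝ} (ht : 0 ≤ t) : ‖(t : ℂ) + 1‖ = t + 1 := by
  exact_mod_cast Complex.norm_of_nonneg (by positivity : 0 ≤ t + 1)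

lemma norm_div_ofReal_add_le {a w : ℂ} {κ t : ℝ} (hκ : 0 < κ) (ht : 0 ≤ t)
    (h : κ * (t + 1) ≤ ‖(t : ℂ) + w‖) :
    ‖a / ((t : ℂ) + w)‖ ≤ κ⁻¹ * ‖a / ((t : ℂ) + 1)‖ := by
  rw [norm_div, norm_div, norm_ofReal_add_one ht, ← div_eq_inv_mul, div_div, mul_comm]
  exact div_le_div_of_nonneg_left (norm_nonneg a) (by positivity) h

lemma norm_div_ofReal_add_sq_le {a w : ℂ} {κ t : ℝ} (hκ : 0 < κ) (ht : 0 ≤ t)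
    (h : κ * (t + 1) ≤ ‖(t : ℂ) + w‖) :
    ‖a / ((t : ℂ) + w) ^ 2‖ ≤ (κ ^ 2)⁻¹ * ‖a / ((t : ℂ) + 1)‖ := by
  rw [norm_div, norm_div, norm_pow, norm_ofReal_add_one ht, ← div_eq_inv_mul, div_div]
  refine div_le_div_of_nonneg_left (norm_nonneg a) (by positivity) ?_
  calc (t + 1) * κ ^ 2 ≤ (κ * (t + 1)) ^ 2 := by nlinarith [sq_nonneg κ]
    _ ≤ ‖(t : ℂ) + w‖ ^ 2 := by gcongr

lemma hasDerivAt_div_add (a b : ℂ) {w : ℂ} (hw : b + w ≠ 0) :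
    HasDerivAt (fun w => a / (b + w)) (-(a / (b + w) ^ 2)) w := by
  refine (((hasDerivAt_id' w).const_add b).inv hw).const_mul a |>.congr_deriv ?_
  field_simp

lemma integrableOn_cpow_div_add {z c : ℂ} (hz0 : 0 < z.re) (hz1 : z.re < 1) (hc : c ∈ slitPlane) :
    IntegrableOn (fun t : ℝ => (t : ℂ) ^ (z - 1) / ((t : ℂ) + c)) (Ioi 0) := by
  obtain ⟨κ, hκ, hκ_le⟩ := exists_pos_mul_le_norm_ofReal_add hc
  refine ((integrableOn_cpow_div_add_one hz0 hz1).norm.const_mul κ⁻¹).mono'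
    (Measurable.aestronglyMeasurable (by fun_prop))
    (ae_restrict_of_forall_mem measurableSet_Ioi fun t (ht : 0 < t) => ?_)
  exact norm_div_ofReal_add_le hκ ht.le (hκ_le t ht.le)

lemma differentiableOn_integral_cpow_div_add {z : ℂ} (hz0 : 0 < z.re) (hz1 : z.re < 1) :
    DifferentiableOn ℂ (fun w => ∫ t in Ioi (0 : ℝ), (t : ℂ) ^ (z - 1) / ((t : ℂ) + w))
      slitPlane := by
  intro c hc
  obtain ⟨κ, hκ, hκ_le⟩ := exists_pos_eventually_mul_le_norm_ofReal_add hc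
  refine (hasDerivAt_integral_of_dominated_loc_of_deriv_le (μ := volume.restrict (Ioi (0 : ℝ)))
    (F := fun w (t : ℝ) => (t : ℂ) ^ (z - 1) / ((t : ℂ) + w))
    (F' := fun w (t : ℝ) => -((t : ℂ) ^ (z - 1) / ((t : ℂ) + w) ^ 2))
    (bound := fun t => (κ ^ 2)⁻¹ * ‖(t : ℂ) ^ (z - 1) / ((t : ℂ) + 1)‖) hκ_le
    (.of_forall fun _ => Measurable.aestronglyMeasurable (by fun_prop))
    (integrableOn_cpow_div_add hz0 hz1 hc) (Measurable.aestronglyMeasurable (by fun_prop))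
    (ae_restrict_of_forall_mem measurableSet_Ioi fun t (ht : 0 < t) w hw => ?_)
    ((integrableOn_cpow_div_add_one hz0 hz1).norm.const_mul _)
    (ae_restrict_of_forall_mem measurableSet_Ioi fun t (ht : 0 < t) w hw =>
      hasDerivAt_div_add _ _ (norm_pos_iff.mp ((by positivity : 0 < κ * (t + 1)).trans_le
        (hw t ht.le))))).2.differentiableAt.differentiableWithinAt
  rw [norm_neg]
  exact norm_div_ofReal_add_sq_le hκ ht.le (hw t ht.le)

lemma eqOn_slitPlane_of_forall_ofReal_pos {f g : ℂ → ℂ} (hf : DifferentiableOn ℂ f slitPlane)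
    (hg : DifferentiableOn ℂ g slitPlane) (hfg : ∀ r : ℝ, 0 < r → f r = g r) :
    EqOn f g slitPlane := by
  have h_one : (1 : ℂ) ∈ slitPlane := one_mem_slitPlane
  have h_tendsto : Tendsto ((↑) : ℝ → ℂ) (𝓝[>] 1) (𝓝[≠] 1) :=
    tendsto_nhdsWithin_of_tendsto_nhds_of_eventually_within _
      ((continuous_ofReal.tendsto' 1 1 ofReal_one).mono_left nhdsWithin_le_nhds)
      (eventually_mem_nhdsWithin.mono fun r (hr : 1 < r) =>
        mem_compl_singleton_iff.mpr (by exact_mod_cast hr.ne'))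
  refine (hf.analyticOnNhd isOpen_slitPlane).eqOn_of_preconnected_of_frequently_eq
    (hg.analyticOnNhd isOpen_slitPlane)
    (starConvex_one_slitPlane.isPathConnected h_one).isConnected.isPreconnected h_one
    (h_tendsto.frequently (Eventually.frequently ?_))
  filter_upwards [eventually_mem_nhdsWithin] with r (hr : 1 < r)
  exact hfg r (by linarith)

end Complex

/-- The Mellin symbol of the kernel `(1/π)(t+c)⁻¹`: for `c ∈ ℂ` not a nonpositive real number
and `0 < Re z < 1`, `∫₀^∞ t^{z−1}/(t+c) dt = π c^{z−1}/sin(π z)`, the integral converging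
absolutely. -/
theorem mellin_symbol_cauchy_kernel
    (c : ℂ) (hc : ∀ r : ℝ, r ≤ 0 → c ≠ (r : ℂ))
    (z : ℂ) (hz0 : 0 < z.re) (hz1 : z.re < 1) :
    IntegrableOn (fun t : ℝ => (t : ℂ) ^ (z - 1) / ((t : ℂ) + c)) (Set.Ioi 0) ∧
      ∫ t in Set.Ioi (0:ℝ), (t : ℂ) ^ (z - 1) / ((t : ℂ) + c) =
        (Real.pi : ℂ) * c ^ (z - 1) / Complex.sin (Real.pi * z) := by
  have hc' : c ∈ Complex.slitPlane := by
    rw [Complex.mem_slitPlane_iff_not_le_zero]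
    intro hc_nonpos
    obtain ⟨hre, him⟩ := Complex.le_def.mp hc_nonpos
    exact hc c.re hre (Complex.ext rfl (by simpa using him))
  refine ⟨Complex.integrableOn_cpow_div_add hz0 hz1 hc', ?_⟩
  have h_rhs : DifferentiableOn ℂ (fun w => (Real.pi : ℂ) * w ^ (z - 1) / Complex.sin (Real.pi * z))
      Complex.slitPlane := fun w hw =>
    (((differentiableAt_fun_id.cpow_const hw).const_mul _).div_const _).differentiableWithinAt
  refine Complex.eqOn_slitPlane_of_forall_ofReal_pos
    (Complex.differentiableOn_integral_cpow_div_add hz0 hz1) h_rhs (fun r hr => ?_) hc'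
  rw [Complex.integral_cpow_div_add_ofReal z hr, Complex.integral_cpow_div_add_one hz0 hz1]
  ring
end
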